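/- arXiv:2109.05690 — 2 statements merged into one kernel-verified Lean document; each statement's English description precedes it below -/
import Mathlib

section
/- Function value convergence at the last iterate of iBPG: under the standing assumptions, if (1/k)Σ_{i=0}^{k-1} i·η_i(‖x̃^{i+1}‖+‖x̃^i‖+1) → 0, (1/k)Σ_{i=0}^{k-1} i·μ_i → 0 and (1/k)Σ_{i=0}^{k-1} i·ν_i → 0, then F(x̃^k) → F* as k → ∞, where F* := inf{F(x) : x ∈ Q} > −∞. -/
/-!
Testing the inexact optimality condition of step `k` against a point `u ∈ dom P ∩ dom φ`, and
rewriting the gradient terms with the four-point identity of the Bregman distance, gives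
`F(x̃ᵏ⁺¹) + L·D(u, xᵏ⁺¹) ≤ F(u) + L·D(u, xᵏ) + εₖ(u)`. Summing telescopes the Bregman terms, so
the average of `F(x̃¹), …, F(x̃ᵏ)` is at most `F(u) + O(1/k)` plus the average of the errors.
Taking `u = x̃ᵏ` instead gives approximate monotonicity `F(x̃ᵏ⁺¹) ≤ F(x̃ᵏ) + δₖ`, which bounds the
last value by that average up to `(1/k) Σ i·δᵢ`. The hypotheses make every error average vanish,
so `limsup F(x̃ᵏ) ≤ F(u)`. Finally `F(u)` comes arbitrarily close to `F*`: move a near-minimiser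
slightly towards a point of `dom P ∩ int Q`, which lies in `int dom φ`.
-/

open Filter Topology RealInnerProductSpace

/-- The Bregman distance associated with the kernel `φ` whose gradient map is `gφ`. -/
noncomputable def breg {E : Type*} [NormedAddCommGroup E] [InnerProductSpace ℝ E]
    (φ : E → ℝ) (gφ : E → E) (x y : E) : ℝ :=
  φ x - φ y - ⟪gφ y, x - y⟫

/-- The ν-subdifferential of `P` (a proper function with effective domain `domP`) at `x`. -/
def nuSubdiff {E : Type*} [NormedAddCommGroup E] [InnerProductSpace ℝ E]
    (P : E → ℝ) (domP : Set E) (ν : ℝ) (x : E) : Set E :=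
  {d : E | ∀ u ∈ domP, P x + ⟪d, u - x⟫ - ν ≤ P u}

open Classical in
/-- Extension of a real-valued function with effective domain `dom` to an `EReal`-valued
function taking the value `⊤` outside `dom`. -/
noncomputable def extFun {E : Type*} (g : E → ℝ) (dom : Set E) : E → EReal :=
  fun x => if x ∈ dom then (g x : EReal) else ⊤

/-- `φ` (with effective domain `domφ` and gradient map `gφ`) is essentially smooth. -/
def EssentiallySmooth {E : Type*} [NormedAddCommGroup E] [InnerProductSpace ℝ E]
    [FiniteDimensional ℝ E] (φ : E → ℝ) (domφ : Set E) (gφ : E → E) : Prop :=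
  (interior domφ).Nonempty ∧
  (∀ x ∈ interior domφ, HasGradientAt φ (gφ x) x) ∧
  ∀ (u : ℕ → E) (u₀ : E), (∀ n, u n ∈ interior domφ) →
    Tendsto u atTop (𝓝 u₀) → u₀ ∈ frontier (interior domφ) →
    Tendsto (fun n => ‖gφ (u n)‖) atTop atTop

/-- The standing assumptions (Assumption A) for the problem `inf {P x + f x : x ∈ Q}`. -/
structure Standing {E : Type*} [NormedAddCommGroup E] [InnerProductSpace ℝ E]
    [FiniteDimensional ℝ E] (Q domφ domP domf X : Set E)
    (φ P f : E → ℝ) (gφ gf : E → E) (L : ℝ) : Prop where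
  hQclosed : IsClosed Q
  hQconv : Convex ℝ Q
  hQint : (interior Q).Nonempty
  hφconv : ConvexOn ℝ domφ φ
  hφstrict : StrictConvexOn ℝ (interior domφ) φ
  hφsmooth : EssentiallySmooth φ domφ gφ
  hφQ : closure domφ = Q
  hPne : domP.Nonempty
  hPconv : ConvexOn ℝ domP P
  hPclosed : LowerSemicontinuous (extFun P domP)
  hPQ : (domP ∩ interior Q).Nonempty
  hfconv : ConvexOn ℝ domf f
  hfclosed : LowerSemicontinuous (extFun f domf)
  hfdom : domφ ⊆ domf
  hfgrad : ∀ x ∈ interior domφ, HasGradientAt f (gf x) x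
  hXclosed : IsClosed X
  hXconv : Convex ℝ X
  hXsup : domP ∩ domφ ⊆ X
  hLnn : 0 ≤ L
  hrel : ∀ u ∈ interior domφ ∩ X, ∀ v ∈ domφ ∩ X,
    f v ≤ f u + ⟪gf u, v - u⟫ + L * breg φ gφ v u

/-- The iBPG iterates with inexactness tolerance sequences `η`, `μ`, `ν`. -/
structure IBPGIter {E : Type*} [NormedAddCommGroup E] [InnerProductSpace ℝ E]
    [FiniteDimensional ℝ E] (domφ domP X : Set E) (φ P : E → ℝ) (gφ gf : E → E) (L : ℝ)
    (η μ ν : ℕ → ℝ) (x xt : ℕ → E) : Prop where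
  hη : ∀ k, 0 ≤ η k
  hμ : ∀ k, 0 ≤ μ k
  hν : ∀ k, 0 ≤ ν k
  hx : ∀ k, x k ∈ X ∩ interior domφ
  hxt : ∀ k, xt k ∈ domP ∩ domφ
  hinex : ∀ k, ∃ d ∈ nuSubdiff P domP (ν k) (xt (k+1)),
    ‖d + gf (x k) + L • (gφ (x (k+1)) - gφ (x k))‖ ≤ η k
  hdist : ∀ k, breg φ gφ (xt (k+1)) (x (k+1)) ≤ μ k

theorem ConvexOn.add_inner_le_of_hasGradientAt {E : Type*} [NormedAddCommGroup E]
    [InnerProductSpace ℝ E] [CompleteSpace E] {s : Set E} {f : E → ℝ} {x u g : E}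
    (hf : ConvexOn ℝ s f) (hx : x ∈ s) (hu : u ∈ s) (hg : HasGradientAt f g x) :
    f x + ⟪g, u - x⟫ ≤ f u := by
  set ℓ : ℝ →ᵃ[ℝ] E := AffineMap.lineMap x u
  have hderiv : HasDerivAt (f ∘ ℓ) ⟪g, u - x⟫ 0 := by
    simpa [ℓ] using hg.hasFDerivAt.comp_hasDerivAt_of_eq (0 : ℝ) AffineMap.hasDerivAt_lineMap
      (by simp)
  have := (hf.comp_affineMap ℓ).le_slope_of_hasDerivAt (by simpa [ℓ] using hx)
    (by simpa [ℓ] using hu) one_pos hderiv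
  simp only [slope_def_field, Function.comp_apply, ℓ, AffineMap.lineMap_apply_zero,
    AffineMap.lineMap_apply_one, sub_zero, div_one] at this
  linarith

theorem breg_nonneg {E : Type*} [NormedAddCommGroup E] [InnerProductSpace ℝ E] [CompleteSpace E]
    {s : Set E} {φ : E → ℝ} {gφ : E → E} {x y : E} (hφ : ConvexOn ℝ s φ) (hx : x ∈ s)
    (hy : y ∈ s) (hgy : HasGradientAt φ (gφ y) y) : 0 ≤ breg φ gφ x y := by
  have := hφ.add_inner_le_of_hasGradientAt hy hx hgy
  rw [breg]
  linarith

theorem inner_sub_gradient_eq_breg {E : Type*} [NormedAddCommGroup E] [InnerProductSpace ℝ E]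
    (φ : E → ℝ) (gφ : E → E) (x y u w : E) :
    ⟪gφ y - gφ x, u - w⟫ = breg φ gφ u x - breg φ gφ u y + breg φ gφ w y - breg φ gφ w x := by
  simp only [breg, inner_sub_left, inner_sub_right]
  ring

def CesaroNull (a : ℕ → ℝ) : Prop :=
  Tendsto (fun k : ℕ => (k : ℝ)⁻¹ * ∑ i ∈ Finset.range k, a i) atTop (𝓝 0)

namespace CesaroNull

variable {a b : ℕ → ℝ}

theorem add (ha : CesaroNull a) (hb : CesaroNull b) : CesaroNull fun i => a i + b i := by
  simpa only [CesaroNull, Finset.sum_add_distrib, mul_add, add_zero] using Tendsto.add ha hb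

theorem const_mul (c : ℝ) (ha : CesaroNull a) : CesaroNull fun i => c * a i := by
  simpa only [CesaroNull, ← Finset.mul_sum, mul_left_comm _ c, mul_zero] using
    Tendsto.const_mul c ha

theorem of_sum_le (hnonneg : ∀ k, 0 ≤ ∑ i ∈ Finset.range k, a i)
    (hle : ∀ k, ∑ i ∈ Finset.range k, a i ≤ ∑ i ∈ Finset.range k, b i) (hb : CesaroNull b) :
    CesaroNull a :=
  squeeze_zero (fun k => mul_nonneg (by positivity) (hnonneg k))
    (fun k => mul_le_mul_of_nonneg_left (hle k) (by positivity)) hb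

theorem of_le (hnonneg : ∀ i, 0 ≤ a i) (hle : ∀ i, a i ≤ b i) (hb : CesaroNull b) :
    CesaroNull a :=
  of_sum_le (fun _ => Finset.sum_nonneg fun i _ => hnonneg i)
    (fun _ => Finset.sum_le_sum fun i _ => hle i) hb

theorem of_index_mul (hnonneg : ∀ i, 0 ≤ a i) (h : CesaroNull fun i => i * a i) :
    CesaroNull a := by
  have hsum (k : ℕ) : ∑ i ∈ Finset.range k, a i ≤ a 0 + ∑ i ∈ Finset.range k, i * a i := by
    induction k with
    | zero => simpa using hnonneg 0
    | succ k ih =>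
      rcases k.eq_zero_or_pos with rfl | hk
      · simp
      · have : a k ≤ k * a k := le_mul_of_one_le_left (hnonneg k) (by exact_mod_cast hk)
        simp only [Finset.sum_range_succ]
        linarith
  have hconst : Tendsto (fun k : ℕ => (k : ℝ)⁻¹ * a 0) atTop (𝓝 0) := by
    simpa using tendsto_inv_atTop_nhds_zero_nat.mul_const (a 0)
  refine squeeze_zero
    (fun k => mul_nonneg (by positivity) (Finset.sum_nonneg fun i _ => hnonneg i))
    (fun k => ?_) (by simpa using hconst.add h)
  rw [← mul_add]
  exact mul_le_mul_of_nonneg_left (hsum k) (by positivity)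

theorem index_mul_pred (hnonneg : ∀ i, 0 ≤ a i) (h : CesaroNull fun i => i * a i) :
    CesaroNull fun i => i * a (i - 1) := by
  refine of_sum_le (b := fun i => i * a i + a i)
    (fun k => Finset.sum_nonneg fun i _ => mul_nonneg i.cast_nonneg (hnonneg _)) (fun k => ?_)
    (h.add (of_index_mul hnonneg h))
  calc ∑ i ∈ Finset.range k, (i : ℝ) * a (i - 1)
      ≤ ∑ i ∈ Finset.range (k + 1), (i : ℝ) * a (i - 1) :=
        Finset.sum_le_sum_of_subset_of_nonneg (Finset.range_subset_range.2 k.le_succ)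
          fun i _ _ => mul_nonneg i.cast_nonneg (hnonneg _)
    _ = ∑ i ∈ Finset.range k, ((i : ℝ) * a i + a i) := by
        rw [Finset.sum_range_succ']
        simp only [Nat.cast_zero, zero_mul, add_zero, Nat.add_sub_cancel, Nat.cast_add,
          Nat.cast_one, add_mul, one_mul]

end CesaroNull

theorem ConvexOn.exists_combo_lt {E : Type*} [AddCommGroup E] [Module ℝ E] {s : Set E}
    {g : E → ℝ} (hg : ConvexOn ℝ s g) {z u : E} (hz : z ∈ s) (hu : u ∈ s) {c : ℝ}
    (hc : g u < c) : ∃ t ∈ Set.Ioc (0 : ℝ) 1, g (t • z + (1 - t) • u) < c := by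
  have hchord : Tendsto (fun t : ℝ => g u + t * (g z - g u)) (𝓝[>] 0) (𝓝 (g u)) :=
    tendsto_nhdsWithin_of_tendsto_nhds <| (Continuous.tendsto' (by fun_prop) _ _ (by simp))
  have hIoc : ∀ᶠ t in 𝓝[>] (0 : ℝ), t ∈ Set.Ioc 0 1 := Ioc_mem_nhdsGT zero_lt_one
  obtain ⟨t, ht, htc⟩ := (hIoc.and (hchord.eventually (gt_mem_nhds hc))).exists
  refine ⟨t, ht, lt_of_le_of_lt ?_ htc⟩
  have := hg.2 hz hu ht.1.le (sub_nonneg.2 ht.2) (by ring)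
  simp only [smul_eq_mul] at this
  linarith

theorem mul_le_sum_add_sum_mul_of_le_add {a δ : ℕ → ℝ} (h : ∀ j, 0 < j → a (j + 1) ≤ a j + δ j)
    (k : ℕ) :
    k * a k ≤ ∑ i ∈ Finset.range k, a (i + 1) + ∑ i ∈ Finset.range k, i * δ i := by
  induction k with
  | zero => simp
  | succ k ih =>
    have hstep : k * a (k + 1) ≤ k * a k + k * δ k := by
      rcases k.eq_zero_or_pos with rfl | hk
      · simp
      · rw [← mul_add]
        exact mul_le_mul_of_nonneg_left (h k hk) k.cast_nonneg
    simp only [Finset.sum_range_succ, Nat.cast_succ]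
    linarith

noncomputable def ibpgStepError {E : Type*} [NormedAddCommGroup E] (L : ℝ) (η μ ν : ℕ → ℝ)
    (xt : ℕ → E) (u : E) (k : ℕ) : ℝ :=
  L * μ k + ν k + η k * (‖u‖ + ‖xt (k + 1)‖)

section IBPG

variable {E : Type*} [NormedAddCommGroup E] [InnerProductSpace ℝ E] [FiniteDimensional ℝ E]
  {Q domφ domP domf X : Set E} {φ P f : E → ℝ} {gφ gf : E → E} {L : ℝ} {η μ ν : ℕ → ℝ}
  {x xt : ℕ → E}

theorem IBPGIter.value_add_breg_le (hiter : IBPGIter domφ domP X φ P gφ gf L η μ ν x xt)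
    (hstand : Standing Q domφ domP domf X φ P f gφ gf L) {u : E} (hu : u ∈ domP ∩ domφ)
    (k : ℕ) :
    P (xt (k + 1)) + f (xt (k + 1)) + L * breg φ gφ u (x (k + 1)) ≤
      P u + f u + L * breg φ gφ u (x k) + ibpgStepError L η μ ν xt u k := by
  obtain ⟨d, hd, hΔ⟩ := hiter.hinex k
  set Δ := d + gf (x k) + L • (gφ (x (k + 1)) - gφ (x k))
  set w := u - xt (k + 1)
  have hxk := hiter.hx k
  have hxt := hiter.hxt (k + 1)
  have hPsub : P (xt (k + 1)) + ⟪d, w⟫ - ν k ≤ P u := hd u hu.1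
  have hf_lower : f (x k) + ⟪gf (x k), u - x k⟫ ≤ f u :=
    hstand.hfconv.add_inner_le_of_hasGradientAt (hstand.hfdom (interior_subset hxk.2))
      (hstand.hfdom hu.2) (hstand.hfgrad _ hxk.2)
  have hf_upper : f (xt (k + 1)) ≤
      f (x k) + ⟪gf (x k), xt (k + 1) - x k⟫ + L * breg φ gφ (xt (k + 1)) (x k) :=
    hstand.hrel _ ⟨hxk.2, hxk.1⟩ _ ⟨hxt.2, hstand.hXsup hxt⟩
  have hΔw : -(η k * (‖u‖ + ‖xt (k + 1)‖)) ≤ ⟪Δ, w⟫ := by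
    have hnorm : ‖Δ‖ * ‖w‖ ≤ η k * (‖u‖ + ‖xt (k + 1)‖) :=
      mul_le_mul hΔ (norm_sub_le _ _) (norm_nonneg _) (hiter.hη k)
    linarith [(abs_le.1 (abs_real_inner_le_norm Δ w)).1]
  have hΔ_expand : ⟪Δ, w⟫ = ⟪d, w⟫ + (⟪gf (x k), u - x k⟫ - ⟪gf (x k), xt (k + 1) - x k⟫) +
      (L * breg φ gφ u (x k) - L * breg φ gφ u (x (k + 1)) +
        L * breg φ gφ (xt (k + 1)) (x (k + 1)) - L * breg φ gφ (xt (k + 1)) (x k)) := by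
    simp only [Δ, w, inner_add_left, real_inner_smul_left]
    rw [inner_sub_gradient_eq_breg]
    simp only [inner_sub_right]
    ring
  have hdist := mul_le_mul_of_nonneg_left (hiter.hdist k) hstand.hLnn
  rw [ibpgStepError]
  linarith

theorem IBPGIter.sum_value_le (hiter : IBPGIter domφ domP X φ P gφ gf L η μ ν x xt)
    (hstand : Standing Q domφ domP domf X φ P f gφ gf L) {u : E} (hu : u ∈ domP ∩ domφ)
    (k : ℕ) :
    ∑ i ∈ Finset.range k, (P (xt (i + 1)) + f (xt (i + 1))) ≤
      k * (P u + f u) + L * breg φ gφ u (x 0) +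
        ∑ i ∈ Finset.range k, ibpgStepError L η μ ν xt u i := by
  have htelescope : ∀ k : ℕ, ∑ i ∈ Finset.range k, (P (xt (i + 1)) + f (xt (i + 1))) +
      L * breg φ gφ u (x k) ≤ k * (P u + f u) + L * breg φ gφ u (x 0) +
        ∑ i ∈ Finset.range k, ibpgStepError L η μ ν xt u i := by
    intro k
    induction k with
    | zero => simp
    | succ k ih =>
      have := hiter.value_add_breg_le hstand hu k
      simp only [Finset.sum_range_succ, Nat.cast_succ]
      linarith
  have hbreg : 0 ≤ L * breg φ gφ u (x k) :=
    mul_nonneg hstand.hLnn <| breg_nonneg hstand.hφconv hu.2 (interior_subset (hiter.hx k).2)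
      (hstand.hφsmooth.2.1 _ (hiter.hx k).2)
  linarith [htelescope k]

theorem IBPGIter.value_succ_le (hiter : IBPGIter domφ domP X φ P gφ gf L η μ ν x xt)
    (hstand : Standing Q domφ domP domf X φ P f gφ gf L) {j : ℕ} (hj : 0 < j) :
    P (xt (j + 1)) + f (xt (j + 1)) ≤
      P (xt j) + f (xt j) + (L * μ (j - 1) + ibpgStepError L η μ ν xt (xt j) j) := by
  have hstep := hiter.value_add_breg_le hstand (hiter.hxt j) j
  have hprev : L * breg φ gφ (xt j) (x j) ≤ L * μ (j - 1) := by
    have := hiter.hdist (j - 1)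
    rw [Nat.sub_add_cancel hj] at this
    exact mul_le_mul_of_nonneg_left this hstand.hLnn
  have hbreg : 0 ≤ L * breg φ gφ (xt j) (x (j + 1)) :=
    mul_nonneg hstand.hLnn <| breg_nonneg hstand.hφconv (hiter.hxt j).2
      (interior_subset (hiter.hx _).2) (hstand.hφsmooth.2.1 _ (hiter.hx _).2)
  linarith

theorem IBPGIter.mul_value_le (hiter : IBPGIter domφ domP X φ P gφ gf L η μ ν x xt)
    (hstand : Standing Q domφ domP domf X φ P f gφ gf L) {u : E} (hu : u ∈ domP ∩ domφ)
    (k : ℕ) :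
    k * (P (xt k) + f (xt k)) ≤ k * (P u + f u) + L * breg φ gφ u (x 0) +
      ∑ i ∈ Finset.range k, (ibpgStepError L η μ ν xt u i +
        i * (L * μ (i - 1) + ibpgStepError L η μ ν xt (xt i) i)) := by
  have hlast := mul_le_sum_add_sum_mul_of_le_add (a := fun j => P (xt j) + f (xt j))
    (fun j hj => hiter.value_succ_le hstand hj) k
  have hsum := hiter.sum_value_le hstand hu k
  rw [Finset.sum_add_distrib]
  linarith

theorem IBPGIter.cesaroNull_stepError (hiter : IBPGIter domφ domP X φ P gφ gf L η μ ν x xt)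
    (hL : 0 ≤ L) (hηC : CesaroNull fun i => i * η i * (‖xt (i + 1)‖ + ‖xt i‖ + 1))
    (hμC : CesaroNull fun i => i * μ i) (hνC : CesaroNull fun i => i * ν i) (u : E) :
    CesaroNull fun i => ibpgStepError L η μ ν xt u i +
      i * (L * μ (i - 1) + ibpgStepError L η μ ν xt (xt i) i) := by
  set β : ℕ → ℝ := fun i => η i * (‖xt (i + 1)‖ + ‖xt i‖ + 1)
  have hβC : CesaroNull β :=
    CesaroNull.of_index_mul (fun i => mul_nonneg (hiter.hη i) (by positivity))
      (by simpa only [mul_assoc] using hηC)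
  refine CesaroNull.of_le (fun i => ?_) (fun i => ?_)
    (((((CesaroNull.of_index_mul hiter.hμ hμC).const_mul L).add
      (CesaroNull.of_index_mul hiter.hν hνC)).add (hβC.const_mul (‖u‖ + 1))).add
      ((((hμC.index_mul_pred hiter.hμ).const_mul L).add (hμC.const_mul L)).add (hνC.add hηC)))
  · have := hiter.hμ i; have := hiter.hμ (i - 1); have := hiter.hν i; have := hiter.hη i
    simp only [ibpgStepError]
    positivity
  · have hη := hiter.hη i
    have hu_le : η i * (‖u‖ + ‖xt (i + 1)‖) ≤ (‖u‖ + 1) * β i := by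
      nlinarith [mul_nonneg hη (norm_nonneg u), mul_nonneg (mul_nonneg hη (norm_nonneg u))
        (norm_nonneg (xt i)), mul_nonneg (mul_nonneg hη (norm_nonneg u))
        (norm_nonneg (xt (i + 1))), mul_nonneg hη (norm_nonneg (xt i))]
    have hxt_le : (i : ℝ) * (η i * (‖xt i‖ + ‖xt (i + 1)‖)) ≤
        i * η i * (‖xt (i + 1)‖ + ‖xt i‖ + 1) := by
      nlinarith [mul_nonneg (i.cast_nonneg : (0 : ℝ) ≤ i) hη]
    simp only [ibpgStepError]
    linear_combination hu_le + hxt_le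

theorem IBPGIter.eventually_value_lt (hiter : IBPGIter domφ domP X φ P gφ gf L η μ ν x xt)
    (hstand : Standing Q domφ domP domf X φ P f gφ gf L)
    (hηC : CesaroNull fun i => i * η i * (‖xt (i + 1)‖ + ‖xt i‖ + 1))
    (hμC : CesaroNull fun i => i * μ i) (hνC : CesaroNull fun i => i * ν i)
    {u : E} (hu : u ∈ domP ∩ domφ) {c : ℝ} (hc : P u + f u < c) :
    ∀ᶠ k in atTop, P (xt k) + f (xt k) < c := by
  have hconst : Tendsto (fun k : ℕ => (k : ℝ)⁻¹ * (L * breg φ gφ u (x 0))) atTop (𝓝 0) := by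
    simpa using tendsto_inv_atTop_nhds_zero_nat.mul_const (L * breg φ gφ u (x 0))
  have hrem := hconst.add (hiter.cesaroNull_stepError hstand.hLnn hηC hμC hνC u)
  rw [add_zero] at hrem
  filter_upwards [hrem.eventually (gt_mem_nhds (sub_pos.2 hc)), eventually_gt_atTop 0]
    with k hsmall hk
  have hk' : (0 : ℝ) < k := by exact_mod_cast hk
  calc P (xt k) + f (xt k) = (k : ℝ)⁻¹ * (k * (P (xt k) + f (xt k))) := by field_simp
    _ ≤ (k : ℝ)⁻¹ * (k * (P u + f u) + L * breg φ gφ u (x 0) +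
        ∑ i ∈ Finset.range k, (ibpgStepError L η μ ν xt u i +
          i * (L * μ (i - 1) + ibpgStepError L η μ ν xt (xt i) i))) := by
      gcongr
      exact hiter.mul_value_le hstand hu k
    _ < c := by
      rw [mul_add, mul_add, ← mul_assoc, inv_mul_cancel₀ hk'.ne', one_mul]
      linarith

theorem Standing.exists_value_lt (hstand : Standing Q domφ domP domf X φ P f gφ gf L)
    {Fstar c : ℝ} (hFstar : IsGLB ((fun u => P u + f u) '' (domP ∩ domf ∩ Q)) Fstar)
    (hc : Fstar < c) : ∃ u ∈ domP ∩ domφ, P u + f u < c := by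
  obtain ⟨_, ⟨u₀, hu₀, rfl⟩, -, hu₀c⟩ := hFstar.exists_between hc
  obtain ⟨z, hzP, hzQ⟩ := hstand.hPQ
  have hzφ : z ∈ interior domφ := by
    rwa [← hstand.hφconv.1.interior_closure_eq_interior_of_nonempty_interior hstand.hφsmooth.1,
      hstand.hφQ]
  have hconv : ConvexOn ℝ (domP ∩ domf) fun u => P u + f u :=
    (hstand.hPconv.subset Set.inter_subset_left (hstand.hPconv.1.inter hstand.hfconv.1)).add
      (hstand.hfconv.subset Set.inter_subset_right (hstand.hPconv.1.inter hstand.hfconv.1))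
  obtain ⟨t, ht, hlt⟩ :=
    hconv.exists_combo_lt ⟨hzP, hstand.hfdom (interior_subset hzφ)⟩ hu₀.1 hu₀c
  refine ⟨_, ⟨hstand.hPconv.1 hzP hu₀.1.1 ht.1.le (sub_nonneg.2 ht.2) (by ring),
    interior_subset (hstand.hφconv.1.combo_interior_closure_mem_interior hzφ
      (hstand.hφQ ▸ hu₀.2) ht.1 (sub_nonneg.2 ht.2) (by ring))⟩, hlt⟩

end IBPG

/-- **Function value convergence at the last iterate of iBPG** (Theorem 3.1(iii)). Under the
standing assumptions, if `(1/k) Σ_{i<k} i·η_i (‖x̃^{i+1}‖+‖x̃^i‖+1) → 0`,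
`(1/k) Σ_{i<k} i·μ_i → 0` and `(1/k) Σ_{i<k} i·ν_i → 0`, then `F(x̃^k) → F*`, where `F = P + f`
and `F* = inf {F x : x ∈ Q} > −∞`. -/
theorem iBPG_last_value_convergence
    {E : Type*} [NormedAddCommGroup E] [InnerProductSpace ℝ E] [FiniteDimensional ℝ E]
    (Q domφ domP domf X : Set E) (φ P f : E → ℝ) (gφ gf : E → E) (L : ℝ)
    (hstand : Standing Q domφ domP domf X φ P f gφ gf L)
    (η μ ν : ℕ → ℝ) (x xt : ℕ → E)
    (hiter : IBPGIter domφ domP X φ P gφ gf L η μ ν x xt)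
    (Fstar : ℝ) (hFstar : IsGLB ((fun u => P u + f u) '' (domP ∩ domf ∩ Q)) Fstar)
    (h1 : Tendsto (fun k : ℕ =>
            (k : ℝ)⁻¹ * ∑ i ∈ Finset.range k, (i : ℝ) * η i * (‖xt (i+1)‖ + ‖xt i‖ + 1))
          atTop (𝓝 0))
    (h2 : Tendsto (fun k : ℕ => (k : ℝ)⁻¹ * ∑ i ∈ Finset.range k, (i : ℝ) * μ i) atTop (𝓝 0))
    (h3 : Tendsto (fun k : ℕ => (k : ℝ)⁻¹ * ∑ i ∈ Finset.range k, (i : ℝ) * ν i) atTop (𝓝 0)) :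
    Tendsto (fun k : ℕ => P (xt k) + f (xt k)) atTop (𝓝 Fstar) := by
  rw [tendsto_order]
  refine ⟨fun c hc => Eventually.of_forall fun k => hc.trans_le (hFstar.1 ⟨xt k, ?_, rfl⟩),
    fun c hc => ?_⟩
  · obtain ⟨hxtP, hxtφ⟩ := hiter.hxt k
    exact ⟨⟨hxtP, hstand.hfdom hxtφ⟩, hstand.hφQ ▸ subset_closure hxtφ⟩
  · obtain ⟨u, hu, huc⟩ := hstand.exists_value_lt hFstar hc
    exact hiter.eventually_value_lt hstand h1 h2 h3 hu huc
end

section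
/- One-step estimate for the inertial method v-iBPG: under the standing assumptions and the restricted relative smoothness exponent assumption, for the v-iBPG iterates, any k ≥ 0 and any x ∈ dom P ∩ dom φ, ((1−θ_{k+1})/θ_{k+1}^γ)·(F(x^{k+1}) − F(x)) + τL·D_φ(x, z^{k+1}) ≤ ((1−θ_k)/θ_k^γ)·(F(x^k) − F(x)) + τL·D_φ(x, z^k) + e(x)·ϑ_{k+1} + θ_k^{1−γ}·η_k·‖z̃^{k+1} − x‖ + τL·μ_k + θ_k^{1−γ}·ν_k, where e(x) := F(x) − F* and ϑ_{k+1} := θ_k^{−γ} − (1−θ_{k+1})·θ_{k+1}^{−γ}. -/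
/-!
Convexity of `P` with the `ν`-subgradient inequality at `z̃^{k+1}`, convexity of `f` linearized
at `y^k`, the relative smoothness bound on `D_f(x^{k+1}, y^k)` and the four-point identity for
`D_φ` applied to the residual `Δ^k` give the estimate multiplied by `θ_k^γ`. After dividing by
`θ_k^γ`, replacing the weight `θ_k^{-γ}` of `F(x^{k+1}) - F(x)` by `(1 - θ_{k+1}) θ_{k+1}^{-γ}`
costs `ϑ_{k+1} (F(x) - F(x^{k+1})) ≤ ϑ_{k+1} e(x)`, since `ϑ_{k+1} ≥ 0` and `F(x^{k+1}) ≥ F*`.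
-/

open Filter Topology RealInnerProductSpace

/-- Conditions on the inertial parameter sequence `{θ_k}` (with `θ_{−1} = θ_0 = 1`; the
sequence is represented over `ℕ`, using truncated subtraction so that `θ (k-1)` at `k = 0`
stands for `θ_{−1} = 1`): `θ_k ∈ (0,1]`, `θ_k ≤ (α−1)/(k+α−1)` for all `k ≥ 1`, where
`α ≥ γ+1`, and `ϑ_k := θ_{k−1}^{−γ} − (1−θ_k)·θ_k^{−γ} ≥ 0` for all `k ≥ 1`. -/
def ThetaSeq (γ α : ℝ) (θ : ℕ → ℝ) : Prop :=
  θ 0 = 1 ∧ (∀ k, θ k ∈ Set.Ioc (0:ℝ) 1) ∧ γ + 1 ≤ α ∧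
  (∀ k : ℕ, 1 ≤ k → θ k ≤ (α - 1) / ((k : ℝ) + α - 1)) ∧
  (∀ k : ℕ, 1 ≤ k → 0 ≤ (θ (k-1)) ^ (-γ) - (1 - θ k) * (θ k) ^ (-γ))

/-- The restricted relative smoothness exponent assumption (Assumption C): there are `τ > 0`
and `γ ≥ 1` such that
`D_f((1−θ)x + θz̃, (1−θ)x + θz) ≤ τ L θ^γ D_φ(z̃, z)` for all `x, z̃ ∈ dom P ∩ dom φ`,
`z ∈ int dom φ ∩ X` and `θ ∈ (0,1]`. -/
def RestrictedRelSmoothExponent {E : Type*} [NormedAddCommGroup E] [InnerProductSpace ℝ E]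
    (domφ domP X : Set E) (φ f : E → ℝ) (gφ gf : E → E) (L τ γ : ℝ) : Prop :=
  0 < τ ∧ 1 ≤ γ ∧
  ∀ xx ∈ domP ∩ domφ, ∀ zt ∈ domP ∩ domφ, ∀ z ∈ interior domφ ∩ X, ∀ θ : ℝ,
    θ ∈ Set.Ioc (0:ℝ) 1 →
    breg f gf ((1 - θ) • xx + θ • zt) ((1 - θ) • xx + θ • z) ≤
      τ * L * θ ^ γ * breg φ gφ zt z

/-- The v-iBPG iterates with parameter sequence `θ` and inexactness tolerance sequences
`η`, `μ`, `ν`. -/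
structure VIBPGIter {E : Type*} [NormedAddCommGroup E] [InnerProductSpace ℝ E]
    [FiniteDimensional ℝ E] (domφ domP X : Set E) (φ P : E → ℝ) (gφ gf : E → E)
    (L τ γ : ℝ) (θ η μ ν : ℕ → ℝ) (x y z zt : ℕ → E) : Prop where
  hη : ∀ k, 0 ≤ η k
  hμ : ∀ k, 0 ≤ μ k
  hν : ∀ k, 0 ≤ ν k
  hx0 : x 0 ∈ domP ∩ domφ
  hy : ∀ k, y k = (1 - θ k) • x k + θ k • z k
  hz : ∀ k, z k ∈ X ∩ interior domφ
  hzt : ∀ k, zt (k+1) ∈ domP ∩ domφ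
  hinex : ∀ k, ∃ d ∈ nuSubdiff P domP (ν k) (zt (k+1)),
    ‖d + gf (y k) + (τ * L * θ k ^ (γ - 1)) • (gφ (z (k+1)) - gφ (z k))‖ ≤ η k
  hdist : ∀ k, breg φ gφ (zt (k+1)) (z (k+1)) ≤ μ k
  hxrec : ∀ k, x (k+1) = (1 - θ k) • x k + θ k • zt (k+1)

section

variable {E : Type*} [NormedAddCommGroup E] [InnerProductSpace ℝ E]

open AffineMap in
theorem ConvexOn.inner_le_sub_of_hasGradientAt [CompleteSpace E] {s : Set E} {f : E → ℝ}
    (hf : ConvexOn ℝ s f) {g y u : E} (hy : y ∈ s) (hu : u ∈ s) (hg : HasGradientAt f g y) :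
    ⟪g, u - y⟫ ≤ f u - f y := by
  have hline : HasDerivAt (lineMap y u : ℝ → E) (u - y) 0 := hasDerivAt_lineMap
  have hg' : HasFDerivAt f (InnerProductSpace.toDual ℝ E g) (lineMap y u (0 : ℝ)) := by
    simpa using hg.hasFDerivAt
  have := (hf.comp_affineMap (lineMap y u)).le_slope_of_hasDerivAt (x := 0) (y := 1)
    (by simpa using hy) (by simpa using hu) one_pos (hg'.comp_hasDerivAt 0 hline)
  simpa [slope] using this

theorem ConvexOn.le_combo_add_inner_add_breg [CompleteSpace E] {s : Set E} {f : E → ℝ}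
    {gf : E → E} (hf : ConvexOn ℝ s f) {x y u : E} (hx : x ∈ s) (hy : y ∈ s) (hu : u ∈ s)
    (hgy : HasGradientAt f (gf y) y) (w : E) {θ : ℝ} (hθ₀ : 0 ≤ θ) (hθ₁ : θ ≤ 1) :
    f ((1 - θ) • x + θ • w) ≤
      (1 - θ) * f x + θ * f u + θ * ⟪gf y, w - u⟫ + breg f gf ((1 - θ) • x + θ • w) y := by
  have hsplit : ⟪gf y, (1 - θ) • x + θ • w - y⟫ =
      (1 - θ) * ⟪gf y, x - y⟫ + θ * ⟪gf y, u - y⟫ + θ * ⟪gf y, w - u⟫ := by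
    rw [show (1 - θ) • x + θ • w - y = (1 - θ) • (x - y) + θ • (u - y) + θ • (w - u) by module]
    simp only [inner_add_right, real_inner_smul_right]
  have hx' := hf.inner_le_sub_of_hasGradientAt hy hx hgy
  have hu' := hf.inner_le_sub_of_hasGradientAt hy hu hgy
  unfold breg
  linear_combination hsplit + (1 - θ) * hx' + θ * hu'

theorem breg_four_point (φ : E → ℝ) (gφ : E → E) (a b u v : E) :
    ⟪gφ a - gφ b, u - v⟫ =
      breg φ gφ u b - breg φ gφ u a - breg φ gφ v b + breg φ gφ v a := by
  simp only [breg, inner_sub_left, inner_sub_right]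
  ring

theorem inexact_breg_prox_step_descent [CompleteSpace E] {domP domf : Set E} {P f φ : E → ℝ}
    {gf gφ : E → E} (hP : ConvexOn ℝ domP P) (hf : ConvexOn ℝ domf f)
    {x y z z' w u d : E} {θ c η μ ν : ℝ} (hθ₀ : 0 ≤ θ) (hθ₁ : θ ≤ 1) (hc : 0 ≤ c)
    (hxP : x ∈ domP) (hxf : x ∈ domf) (hy : y ∈ domf) (hgy : HasGradientAt f (gf y) y)
    (hwP : w ∈ domP) (huP : u ∈ domP) (huf : u ∈ domf)
    (hd : d ∈ nuSubdiff P domP ν w) (hres : ‖d + gf y + c • (gφ z' - gφ z)‖ ≤ η)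
    (hsmooth : breg f gf ((1 - θ) • x + θ • w) y ≤ c * θ * breg φ gφ w z)
    (hdist : breg φ gφ w z' ≤ μ) :
    P ((1 - θ) • x + θ • w) + f ((1 - θ) • x + θ • w) - (P u + f u) ≤
      (1 - θ) * (P x + f x - (P u + f u)) + θ * η * ‖w - u‖
        + c * θ * (breg φ gφ u z - breg φ gφ u z') + c * θ * μ + θ * ν := by
  have hPw : P ((1 - θ) • x + θ • w) ≤ (1 - θ) * P x + θ * P w :=
    hP.2 hxP hwP (by linarith) hθ₀ (by ring)
  have hfw := hf.le_combo_add_inner_add_breg hxf hy huf hgy w hθ₀ hθ₁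
  have hsub : P w + ⟪d, u - w⟫ - ν ≤ P u := hd u huP
  have hCS : ⟪d + gf y + c • (gφ z' - gφ z), w - u⟫ ≤ η * ‖w - u‖ :=
    (real_inner_le_norm _ _).trans (mul_le_mul_of_nonneg_right hres (norm_nonneg _))
  have hexpand : ⟪d + gf y + c • (gφ z' - gφ z), w - u⟫ =
      -⟪d, u - w⟫ + ⟪gf y, w - u⟫ - c * (breg φ gφ u z - breg φ gφ u z'
        - breg φ gφ w z + breg φ gφ w z') := by
    rw [← breg_four_point]
    simp only [inner_add_left, inner_sub_left, inner_sub_right, real_inner_smul_left]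
    ring
  linear_combination hPw + hfw + hsmooth + θ * hsub + θ * hCS + (-θ) * hexpand + c * θ * hdist

end

theorem rescale_one_step {θ θ' γ K a a' b b' η n μ ν e : ℝ} (hθ : 0 < θ) (hθ' : 0 ≤ θ')
    (hϑ : 0 ≤ θ ^ (-γ) - (1 - θ') * θ' ^ (-γ)) (he : -a' ≤ e)
    (h : a' ≤ (1 - θ) * a + θ * η * n + K * θ ^ γ * (b - b') + K * θ ^ γ * μ + θ * ν) :
    (1 - θ') / θ' ^ γ * a' + K * b' ≤
      (1 - θ) / θ ^ γ * a + K * b + e * (θ ^ (-γ) - (1 - θ') * θ' ^ (-γ))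
        + θ ^ (1 - γ) * η * n + K * μ + θ ^ (1 - γ) * ν := by
  have hinv : θ ^ (-γ) * θ ^ γ = 1 := by rw [← Real.rpow_add hθ]; simp
  have hpow : θ ^ (-γ) * θ = θ ^ (1 - γ) := by
    rw [← Real.rpow_add_one hθ.ne']; ring_nf
  rw [div_eq_mul_inv, div_eq_mul_inv, ← Real.rpow_neg hθ', ← Real.rpow_neg hθ.le, ← hpow]
  linear_combination θ ^ (-γ) * h + (θ ^ (-γ) - (1 - θ') * θ' ^ (-γ)) * he
    + (K * (b - b') + K * μ) * hinv

theorem VIBPGIter.x_mem {E : Type*} [NormedAddCommGroup E] [InnerProductSpace ℝ E]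
    [FiniteDimensional ℝ E] {domφ domP X : Set E} {φ P : E → ℝ} {gφ gf : E → E}
    {L τ γ : ℝ} {θ η μ ν : ℕ → ℝ} {x y z zt : ℕ → E}
    (hiter : VIBPGIter domφ domP X φ P gφ gf L τ γ θ η μ ν x y z zt)
    (hθ : ∀ k, θ k ∈ Set.Ioc 0 1) (hconv : Convex ℝ (domP ∩ domφ)) (n : ℕ) :
    x n ∈ domP ∩ domφ := by
  induction n with
  | zero => exact hiter.hx0
  | succ k ih =>
    rw [hiter.hxrec k]
    exact hconv ih (hiter.hzt k) (by linarith [(hθ k).2]) (hθ k).1.le (by ring)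

/-- **One-step estimate for v-iBPG** (Lemma 4.2). Under the standing assumptions and the
restricted relative smoothness exponent assumption, for the v-iBPG iterates, any `k ≥ 0` and
any `x ∈ dom P ∩ dom φ`,
`((1−θ_{k+1})/θ_{k+1}^γ)(F(x^{k+1}) − F(x)) + τL D_φ(x, z^{k+1}) ≤
 ((1−θ_k)/θ_k^γ)(F(x^k) − F(x)) + τL D_φ(x, z^k) + e(x) ϑ_{k+1}
 + θ_k^{1−γ} η_k ‖z̃^{k+1} − x‖ + τL μ_k + θ_k^{1−γ} ν_k`,
where `F = P + f`, `e(x) := F(x) − F*` and `ϑ_{k+1} := θ_k^{−γ} − (1−θ_{k+1})θ_{k+1}^{−γ}`. -/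
theorem vIBPG_one_step_estimate
    {E : Type*} [NormedAddCommGroup E] [InnerProductSpace ℝ E] [FiniteDimensional ℝ E]
    (Q domφ domP domf X : Set E) (φ P f : E → ℝ) (gφ gf : E → E) (L τ γ α : ℝ)
    (hstand : Standing Q domφ domP domf X φ P f gφ gf L)
    (hrrse : RestrictedRelSmoothExponent domφ domP X φ f gφ gf L τ γ)
    (θ η μ ν : ℕ → ℝ) (hθ : ThetaSeq γ α θ)
    (x y z zt : ℕ → E)
    (hiter : VIBPGIter domφ domP X φ P gφ gf L τ γ θ η μ ν x y z zt)
    (Fstar : ℝ) (hFstar : IsGLB ((fun u => P u + f u) '' (domP ∩ domf ∩ Q)) Fstar) :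
    ∀ (k : ℕ), ∀ xx ∈ domP ∩ domφ,
      (1 - θ (k+1)) / θ (k+1) ^ γ * ((P (x (k+1)) + f (x (k+1))) - (P xx + f xx))
          + τ * L * breg φ gφ xx (z (k+1)) ≤
        (1 - θ k) / θ k ^ γ * ((P (x k) + f (x k)) - (P xx + f xx))
          + τ * L * breg φ gφ xx (z k)
          + (P xx + f xx - Fstar) * (θ k ^ (-γ) - (1 - θ (k+1)) * θ (k+1) ^ (-γ))
          + θ k ^ (1 - γ) * η k * ‖zt (k+1) - xx‖
          + τ * L * μ k + θ k ^ (1 - γ) * ν k := by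
  intro k u hu
  obtain ⟨-, hθIoc, -, -, hϑ⟩ := hθ
  obtain ⟨hτ, -, hsmooth⟩ := hrrse
  obtain ⟨hθ₀, hθ₁⟩ := hθIoc k
  have hx := hiter.x_mem hθIoc (hstand.hPconv.1.inter hstand.hφconv.1)
  have hy : y k ∈ interior domφ := by
    rw [hiter.hy k]
    exact hstand.hφconv.1.combo_self_interior_mem_interior (hx k).2 (hiter.hz k).2
      (by linarith) hθ₀ (by ring)
  have hcθ : τ * L * θ k ^ (γ - 1) * θ k = τ * L * θ k ^ γ := by
    rw [mul_assoc, ← Real.rpow_add_one hθ₀.ne', sub_add_cancel]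
  have hB := hsmooth (x k) (hx k) (zt (k+1)) (hiter.hzt k) (z k)
    ⟨(hiter.hz k).2, (hiter.hz k).1⟩ (θ k) (hθIoc k)
  rw [← hiter.hy k, ← hcθ] at hB
  have hc : 0 ≤ τ * L * θ k ^ (γ - 1) :=
    mul_nonneg (mul_nonneg hτ.le hstand.hLnn) (Real.rpow_nonneg hθ₀.le _)
  obtain ⟨d, hd, hres⟩ := hiter.hinex k
  have hdesc := inexact_breg_prox_step_descent hstand.hPconv hstand.hfconv hθ₀.le hθ₁ hc
    (hx k).1 (hstand.hfdom (hx k).2) (hstand.hfdom (interior_subset hy)) (hstand.hfgrad _ hy)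
    (hiter.hzt k).1 hu.1 (hstand.hfdom hu.2) hd hres hB (hiter.hdist k)
  rw [← hiter.hxrec k, hcθ] at hdesc
  have hFstar_le : Fstar ≤ P (x (k+1)) + f (x (k+1)) := hFstar.1
    ⟨x (k+1), ⟨⟨(hx _).1, hstand.hfdom (hx _).2⟩, hstand.hφQ ▸ subset_closure (hx _).2⟩, rfl⟩
  exact rescale_one_step hθ₀ (hθIoc (k+1)).1.le (by simpa using hϑ (k+1) (by omega))
    (by linarith) hdesc
end
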